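/- Let J = ⟨p₁,…,p_n⟩ ⊆ ℝ[x₁,…,x_n] be generated by a sequence of parameters of degree d and let I ⊇ J be a homogeneous ideal. Suppose that for all homogeneous ideals containing a sequence of parameters of degree 3 in ℝ[x,y,z,w] the implication HF₃ = 14 ⇒ HF₄ ≤ 14 holds, and grant the duality HF_t(J) = HF_t(I) + HF_{n(d−1)−t}(J : I) for 0 ≤ t ≤ n(d−1). Then for n = 4, d = 3: every homogeneous ideal I in ℝ[x,y,z,w] containing a sequence of parameters of degree 3 with HF₄(I) ≤ 4 satisfies HF₅(I) ≤ 1. -/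

import Mathlib

/-!
Put `J = ⟨p₁, …, p₄⟩`. Duality against `I = ⊤` makes `HF(J)` symmetric about degree 4. The `pᵢ`
are linearly independent: otherwise `⟨x, y, z, w⟩`, which has height 4, would be a minimal prime of
an ideal with three generators, against Krull's height theorem. Hence
`HF₅(J) = HF₃(J) = 20 - 4 = 16` and `HF₄(J) ≥ 35 - 4 · 4 = 19`.

If `HF₅(I) ≥ 2`, duality in degree 5 gives `HF₃(J : I) ≤ 14`. The colon ideal is not known to be
homogeneous, so the assumed implication is applied instead to the ideal generated by a
6-dimensional space of cubics between `span {pᵢ}` and `(J : I)₃`; this gives `HF₄(J : I) ≤ 14`,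
and duality in degree 4 gives `HF₄(I) ≥ 19 - 14 = 5`.
-/

open MvPolynomial

/-- The Hilbert function `HF_t(I) = dim_ℝ (ℝ[x,y,z,w]_t / I_t)`. -/
noncomputable def HF (I : Ideal (MvPolynomial (Fin 4) ℝ)) (t : ℕ) : ℕ :=
  Module.finrank ℝ (↥(homogeneousSubmodule (Fin 4) ℝ t) ⧸
    (Submodule.comap (homogeneousSubmodule (Fin 4) ℝ t).subtype (Submodule.restrictScalars ℝ I)))

/-- `p₁,…,p₄` is a sequence of parameters of degree 3 in `ℝ[x,y,z,w]`. -/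
def SeqParam3 (p : Fin 4 → MvPolynomial (Fin 4) ℝ) : Prop :=
  (∀ i, p i ∈ homogeneousSubmodule (Fin 4) ℝ 3) ∧
  (Ideal.span (Set.range p)).radical = Ideal.span (Set.range X)

/-- A homogeneous ideal: one generated by homogeneous polynomials. -/
def IsHomogIdeal (I : Ideal (MvPolynomial (Fin 4) ℝ)) : Prop :=
  ∃ S : Set (MvPolynomial (Fin 4) ℝ),
    (∀ f ∈ S, ∃ t : ℕ, f ∈ homogeneousSubmodule (Fin 4) ℝ t) ∧ I = Ideal.span S

namespace MvPolynomial

variable {σ ι R K : Type*}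

theorem X_notMem_span_X_image [CommSemiring R] [Nontrivial R] {s : Set σ} {i : σ} (hi : i ∉ s) :
    (X i : MvPolynomial σ R) ∉ Ideal.span (X '' s) := by
  rw [mem_ideal_span_X_image]
  intro h
  obtain ⟨j, hj, hne⟩ := h (Finsupp.single i 1) (by simp [support_X])
  obtain ⟨rfl, -⟩ := Finsupp.single_apply_ne_zero.1 hne
  exact hi hj

section Krull

variable [CommRing R] [IsDomain R]

theorem isPrime_span_X_image (s : Set σ) :
    (Ideal.span (X '' s : Set (MvPolynomial σ R))).IsPrime := by
  classical
  let φ : MvPolynomial σ R →ₐ[R] MvPolynomial σ R := aeval fun i => if i ∈ s then 0 else X i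
  have hsub : ∀ f, f - φ f ∈ Ideal.span (X '' s : Set (MvPolynomial σ R)) := by
    intro f
    induction f using MvPolynomial.induction_on with
    | C a => simp
    | add f g hf hg => simpa [add_sub_add_comm] using add_mem hf hg
    | mul_X f i hf =>
      have hXi : X i - φ (X i) ∈ Ideal.span (X '' s : Set (MvPolynomial σ R)) := by
        by_cases hi : i ∈ s
        · simpa [φ, hi] using Ideal.subset_span (Set.mem_image_of_mem X hi)
        · simp [φ, hi]
      have hmul : f * X i - φ (f * X i) = (f - φ f) * X i + φ f * (X i - φ (X i)) := by
        rw [map_mul]; ring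
      rw [hmul]
      exact add_mem (Ideal.mul_mem_right _ _ hf) (Ideal.mul_mem_left _ _ hXi)
  have hker : RingHom.ker φ = Ideal.span (X '' s) := by
    refine le_antisymm (fun f hf => by simpa [RingHom.mem_ker.1 hf] using hsub f) ?_
    rw [Ideal.span_le]
    rintro _ ⟨i, hi, rfl⟩
    simp [φ, hi]
  exact hker ▸ RingHom.ker_isPrime φ

theorem natCast_le_height_span_range_X (n : ℕ) :
    (n : ℕ∞) ≤ (Ideal.span (Set.range X : Set (MvPolynomial (Fin n) R))).height := by
  let P : ℕ → Ideal (MvPolynomial (Fin n) R) := fun k => Ideal.span (X '' {i | (i : ℕ) < k})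
  have hP : ∀ k ≤ n, (k : ℕ∞) ≤ (P k).height := by
    intro k
    induction k with
    | zero => simp
    | succ k ih =>
      intro hk
      have hlt : P k < P (k + 1) := SetLike.lt_iff_le_and_exists.2
        ⟨Ideal.span_mono (Set.image_mono fun _ hi => Nat.lt_succ_of_lt hi), X ⟨k, hk⟩,
          Ideal.subset_span ⟨_, Nat.lt_succ_self k, rfl⟩, X_notMem_span_X_image (lt_irrefl k)⟩
      have := isPrime_span_X_image (R := R) {i : Fin n | (i : ℕ) < k}
      have := isPrime_span_X_image (R := R) {i : Fin n | (i : ℕ) < k + 1}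
      calc ((k + 1 : ℕ) : ℕ∞) = (k : ℕ∞) + 1 := by push_cast; rfl
        _ ≤ (P k).height + 1 := by gcongr; exact ih (by omega)
        _ ≤ (P (k + 1)).height := Ideal.height_add_one_le_of_lt_of_isPrime hlt
  convert hP n le_rfl using 3
  ext
  simp

end Krull

theorem linearIndependent_of_radical_span_eq_span_X [Field K] {n : ℕ}
    {p : Fin n → MvPolynomial (Fin n) K}
    (hp : (Ideal.span (Set.range p)).radical = Ideal.span (Set.range X)) :
    LinearIndependent K p := by
  classical
  rw [linearIndependent_iff_notMem_span]
  intro i hi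
  let s : Finset (MvPolynomial (Fin n) K) := (Finset.univ.erase i).image p
  have hspan : Ideal.span (Set.range p) = Ideal.span (s : Set (MvPolynomial (Fin n) K)) := by
    refine le_antisymm (Ideal.span_le.2 ?_) (Ideal.span_mono (by simp [s]))
    rintro _ ⟨j, rfl⟩
    by_cases hj : j = i
    · subst hj
      exact Submodule.span_le_restrictScalars K _ _ (Submodule.span_mono (by simp [s]) hi)
    · exact Ideal.subset_span (by simpa [s] using ⟨j, hj, rfl⟩)
  have : (Ideal.span (Set.range X : Set (MvPolynomial (Fin n) K))).IsPrime := by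
    simpa using isPrime_span_X_image (R := K) (Set.univ : Set (Fin n))
  have hmin : Ideal.span (Set.range X) ∈
      (Ideal.span (s : Set (MvPolynomial (Fin n) K))).minimalPrimes := by
    rw [← hspan, ← Ideal.radical_minimalPrimes, hp, Ideal.minimalPrimes_eq_subsingleton_self]
    rfl
  have hs : s.card < n :=
    Finset.card_image_le.trans_lt (by simpa using i.pos)
  have := (natCast_le_height_span_range_X (R := K) n).trans
    (Ideal.height_le_card_of_mem_minimalPrimes_span_finset hmin)
  exact absurd (by exact_mod_cast this) (not_le.2 hs)

section CommSemiring

variable [CommSemiring R]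

attribute [local instance] gradedAlgebra in
theorem homogeneousComponent_mul_of_mem_right {e n : ℕ} {p : MvPolynomial σ R}
    (hp : p ∈ homogeneousSubmodule σ R e) (h : e ≤ n) (c : MvPolynomial σ R) :
    homogeneousComponent n (c * p) = homogeneousComponent (n - e) c * p := by
  have := DirectSum.coe_decompose_mul_of_right_mem_of_le (homogeneousSubmodule σ R) hp h (a := c)
  rwa [← DirectSum.Decomposition.decompose'_eq, decomposition.decompose'_apply,
    decomposition.decompose'_apply] at this

theorem exists_sum_mul_eq_of_mem_span_range [Fintype ι] {e m : ℕ} {p : ι → MvPolynomial σ R}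
    (hp : ∀ i, p i ∈ homogeneousSubmodule σ R e) {x : MvPolynomial σ R}
    (hx : x ∈ Ideal.span (Set.range p)) (hxm : x ∈ homogeneousSubmodule σ R (m + e)) :
    ∃ c : ι → MvPolynomial σ R,
      (∀ i, c i ∈ homogeneousSubmodule σ R m) ∧ ∑ i, c i * p i = x := by
  obtain ⟨c, rfl⟩ := Ideal.mem_span_range_iff_exists_fun.1 hx
  refine ⟨fun i => homogeneousComponent m (c i), fun i => homogeneousComponent_mem m (c i), ?_⟩
  rw [← homogeneousComponent_eq_self hxm, map_sum]
  refine Finset.sum_congr rfl fun i _ => ?_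
  rw [homogeneousComponent_mul_of_mem_right (hp i) (Nat.le_add_left e m), Nat.add_sub_cancel]

end CommSemiring

section Field

variable [Field K]

instance [Finite σ] (n : ℕ) : Module.Finite K (homogeneousSubmodule σ K n) :=
  Module.Finite.iff_fg.2 (homogeneousSubmodule_fg σ K n)

theorem finrank_homogeneousSubmodule [Fintype σ] (n : ℕ) :
    Module.finrank K (homogeneousSubmodule σ K n) = (Fintype.card σ + n - 1).choose n := by
  classical
  have hS : {d : σ →₀ ℕ | d.degree = n} = ↑((Finset.univ : Finset σ).finsuppAntidiag n) := by
    ext d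
    simp [Finsupp.degree_eq_sum]
  rw [homogeneousSubmodule_eq_finsupp_supported, hS,
    (AddMonoidAlgebra.supportedEquivFinsupp _).finrank_eq, Module.finrank_finsupp_self]
  simp [Finset.card_finsuppAntidiag_nat_eq_choose]

/-- The degree-`t` part `I_t` of `I`: `HF I t` is its codimension in the forms of degree `t`. -/
noncomputable abbrev degreePart (I : Ideal (MvPolynomial σ K)) (t : ℕ) :
    Submodule K (homogeneousSubmodule σ K t) :=
  (I.restrictScalars K).comap (homogeneousSubmodule σ K t).subtype

variable {e : ℕ}

theorem map_subtype_degreePart_span {S : Set (MvPolynomial σ K)}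
    (hS : S ⊆ homogeneousSubmodule σ K e) :
    (degreePart (Ideal.span S) e).map (homogeneousSubmodule σ K e).subtype =
      Submodule.span K S := by
  refine le_antisymm ?_ (Submodule.span_le.2 fun x hx => ⟨⟨x, hS hx⟩, Ideal.subset_span hx, rfl⟩)
  rintro _ ⟨⟨x, hxe⟩, hx, rfl⟩
  obtain ⟨n, c, s, hcs⟩ := Submodule.mem_span_set'.1 (show x ∈ Ideal.span S from hx)
  change x ∈ Submodule.span K S
  rw [← homogeneousComponent_eq_self hxe, ← hcs, map_sum]
  refine Submodule.sum_mem _ fun i _ => ?_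
  rw [smul_eq_mul, homogeneousComponent_mul_of_mem_right (hS (s i).2) le_rfl, Nat.sub_self,
    homogeneousComponent_zero, ← smul_eq_C_mul]
  exact Submodule.smul_mem _ _ (Submodule.subset_span (s i).2)

theorem finrank_degreePart_span_range_le [Finite σ] [Fintype ι] {p : ι → MvPolynomial σ K}
    (hp : ∀ i, p i ∈ homogeneousSubmodule σ K e) (m : ℕ) :
    Module.finrank K (degreePart (Ideal.span (Set.range p)) (m + e)) ≤
      Fintype.card ι * Module.finrank K (homogeneousSubmodule σ K m) := by
  let ψ : (ι → homogeneousSubmodule σ K m) →ₗ[K] homogeneousSubmodule σ K (m + e) :=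
    LinearMap.codRestrict _
      (∑ i, LinearMap.mulRight K (p i) ∘ₗ (homogeneousSubmodule σ K m).subtype ∘ₗ
        LinearMap.proj i)
      fun c => by
        simpa using Submodule.sum_mem _ fun i _ =>
          homogeneousSubmodule_mul m e (Submodule.mul_mem_mul (c i).2 (hp i))
  have hψ : degreePart (Ideal.span (Set.range p)) (m + e) ≤ LinearMap.range ψ := by
    rintro ⟨x, hxd⟩ hx
    obtain ⟨c, hc, rfl⟩ := exists_sum_mul_eq_of_mem_span_range hp hx hxd
    exact ⟨fun i => ⟨c i, hc i⟩, Subtype.ext (by simp [ψ, LinearMap.sum_apply])⟩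
  calc _ ≤ Module.finrank K (LinearMap.range ψ) := Submodule.finrank_mono hψ
    _ ≤ Module.finrank K (ι → homogeneousSubmodule σ K m) := LinearMap.finrank_range_le ψ
    _ = _ := by rw [Module.finrank_pi_fintype, Finset.sum_const, Finset.card_univ, smul_eq_mul]

end Field

end MvPolynomial

theorem Submodule.exists_le_le_finrank_eq {K V : Type*} [DivisionRing K] [AddCommGroup V] [Module K V]
    [FiniteDimensional K V] {W₀ W : Submodule K V} (h : W₀ ≤ W) {m : ℕ}
    (h₀ : Module.finrank K W₀ ≤ m) (hm : m ≤ Module.finrank K W) :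
    ∃ U : Submodule K V, W₀ ≤ U ∧ U ≤ W ∧ Module.finrank K U = m := by
  obtain ⟨k, rfl⟩ := Nat.exists_eq_add_of_le h₀
  induction k with
  | zero => exact ⟨W₀, le_rfl, h, rfl⟩
  | succ k ih =>
    obtain ⟨U, hW₀U, hUW, hU⟩ := ih (by omega) (by omega)
    obtain ⟨x, hxW, hxU⟩ := SetLike.exists_of_lt <| lt_of_le_of_ne hUW fun hUW' => by
      rw [hUW'] at hU
      omega
    refine ⟨U ⊔ Submodule.span K {x}, le_sup_of_le_left hW₀U,
      sup_le hUW ((Submodule.span_singleton_le_iff_mem _ _).2 hxW), ?_⟩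
    rw [Submodule.finrank_sup_span_singleton hxU, hU, add_assoc]

theorem HF_add_finrank_degreePart (I : Ideal (MvPolynomial (Fin 4) ℝ)) (t : ℕ) :
    HF I t + Module.finrank ℝ (degreePart I t) = (t + 3).choose t := by
  rw [HF, Submodule.finrank_quotient_add_finrank, finrank_homogeneousSubmodule,
    Fintype.card_fin, show 4 + t - 1 = t + 3 by omega]

theorem HF_top (t : ℕ) : HF ⊤ t = 0 := by
  rw [HF, Module.finrank_zero_iff]
  simp

theorem HF_antitone {I I' : Ideal (MvPolynomial (Fin 4) ℝ)} (h : I ≤ I') (t : ℕ) :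
    HF I' t ≤ HF I t := by
  have := HF_add_finrank_degreePart I t
  have := HF_add_finrank_degreePart I' t
  have : Module.finrank ℝ (degreePart I t) ≤ Module.finrank ℝ (degreePart I' t) :=
    Submodule.finrank_mono (Submodule.comap_mono fun _ hx => h hx)
  omega

theorem isHomogIdeal_span {e : ℕ} {S : Set (MvPolynomial (Fin 4) ℝ)}
    (hS : S ⊆ homogeneousSubmodule (Fin 4) ℝ e) : IsHomogIdeal (Ideal.span S) :=
  ⟨S, fun _ hf => ⟨e, hS hf⟩, rfl⟩

theorem HF_four_le_of_HF_three_le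
    (hEGH : ∀ I : Ideal (MvPolynomial (Fin 4) ℝ), IsHomogIdeal I →
      (∃ p : Fin 4 → MvPolynomial (Fin 4) ℝ, SeqParam3 p ∧ ∀ i, p i ∈ I) →
      HF I 3 = 14 → HF I 4 ≤ 14)
    {p : Fin 4 → MvPolynomial (Fin 4) ℝ} (hp : SeqParam3 p) {K : Ideal (MvPolynomial (Fin 4) ℝ)}
    (hpK : ∀ i, p i ∈ K) (hK : HF K 3 ≤ 14) : HF K 4 ≤ 14 := by
  let W₀ : Submodule ℝ (homogeneousSubmodule (Fin 4) ℝ 3) :=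
    Submodule.span ℝ (Set.range fun i => ⟨p i, hp.1 i⟩)
  have hW₀K : W₀ ≤ degreePart K 3 := Submodule.span_le.2 <| Set.range_subset_iff.2 hpK
  have hW₀ : Module.finrank ℝ W₀ ≤ 6 := (finrank_range_le_card _).trans (by simp)
  have hK6 : 6 ≤ Module.finrank ℝ (degreePart K 3) := by
    have := HF_add_finrank_degreePart K 3
    norm_num [Nat.choose] at this
    omega
  obtain ⟨V, hW₀V, hVK, hV⟩ := Submodule.exists_le_le_finrank_eq hW₀K hW₀ hK6
  let S : Set (MvPolynomial (Fin 4) ℝ) := V.map (homogeneousSubmodule (Fin 4) ℝ 3).subtype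
  have hS : S ⊆ homogeneousSubmodule (Fin 4) ℝ 3 := by
    rintro _ ⟨x, -, rfl⟩
    exact x.2
  have hS3 : HF (Ideal.span S) 3 = 14 := by
    have := HF_add_finrank_degreePart (Ideal.span S) 3
    rw [← Submodule.finrank_map_subtype_eq, map_subtype_degreePart_span hS, Submodule.span_eq,
      Submodule.finrank_map_subtype_eq, hV] at this
    norm_num [Nat.choose] at this
    omega
  have hpS : ∀ i, p i ∈ Ideal.span S := fun i =>
    Ideal.subset_span ⟨⟨p i, hp.1 i⟩, hW₀V (Submodule.subset_span ⟨i, rfl⟩), rfl⟩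
  have hSK : Ideal.span S ≤ K := by
    rw [Ideal.span_le]
    rintro _ ⟨x, hx, rfl⟩
    exact hVK hx
  exact (HF_antitone hSK 4).trans (hEGH _ (isHomogIdeal_span hS) ⟨p, hp, hpS⟩ hS3)

/-- Take `n = 4`, `d = 3` (so `n(d−1) = 8`). Suppose that for all homogeneous ideals `I`
in `ℝ[x,y,z,w]` containing a sequence of parameters of degree 3 the implication
`HF₃(I) = 14 ⇒ HF₄(I) ≤ 14` holds, and grant the duality
`HF_t(J) = HF_t(I) + HF_{8−t}(J : I)` for `0 ≤ t ≤ 8`, where `J ⊆ I` is generated by a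
sequence of parameters of degree 3. Then every homogeneous ideal `I` in `ℝ[x,y,z,w]`
containing a sequence of parameters of degree 3 with `HF₄(I) ≤ 4` satisfies
`HF₅(I) ≤ 1`. -/
theorem stmt_19
    (hEGH : ∀ I : Ideal (MvPolynomial (Fin 4) ℝ), IsHomogIdeal I →
      (∃ p : Fin 4 → MvPolynomial (Fin 4) ℝ, SeqParam3 p ∧ ∀ i, p i ∈ I) →
      HF I 3 = 14 → HF I 4 ≤ 14)
    (hdual : ∀ p : Fin 4 → MvPolynomial (Fin 4) ℝ, SeqParam3 p →
      ∀ I : Ideal (MvPolynomial (Fin 4) ℝ), IsHomogIdeal I →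
      Ideal.span (Set.range p) ≤ I →
      ∀ t : ℕ, t ≤ 8 →
        HF (Ideal.span (Set.range p)) t
          = HF I t + HF ((Ideal.span (Set.range p)).colon I) (8 - t)) :
    ∀ I : Ideal (MvPolynomial (Fin 4) ℝ), IsHomogIdeal I →
      (∃ p : Fin 4 → MvPolynomial (Fin 4) ℝ, SeqParam3 p ∧ ∀ i, p i ∈ I) →
      HF I 4 ≤ 4 → HF I 5 ≤ 1 := by
  rintro I hI ⟨p, hp, hpI⟩ hI4
  have hJdual := hdual p hp
  set J := Ideal.span (Set.range p)
  have hJI : J ≤ I := Ideal.span_le.2 (Set.range_subset_iff.2 hpI)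
  have hJ3 : HF J 3 = 16 := by
    have := HF_add_finrank_degreePart J 3
    rw [← Submodule.finrank_map_subtype_eq,
      map_subtype_degreePart_span (Set.range_subset_iff.2 hp.1),
      finrank_span_eq_card (linearIndependent_of_radical_span_eq_span_X hp.2)] at this
    norm_num [Nat.choose] at this
    omega
  have hJ4 : 19 ≤ HF J 4 := by
    have hadd := HF_add_finrank_degreePart J 4
    have hle : Module.finrank ℝ (degreePart J 4) ≤ 4 * 4 := by
      simpa [finrank_homogeneousSubmodule] using finrank_degreePart_span_range_le hp.1 1
    norm_num [Nat.choose] at hadd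
    omega
  have hJ5 : HF J 5 = HF J 3 := by
    have htop : IsHomogIdeal ⊤ := by
      rw [← Ideal.span_singleton_one]
      exact isHomogIdeal_span (Set.singleton_subset_iff.2 (isHomogeneous_one (Fin 4) ℝ))
    simpa [HF_top] using hJdual ⊤ htop le_top 5 (by norm_num)
  have hdual4 : HF J 4 = HF I 4 + HF (J.colon I) 4 := hJdual I hI hJI 4 (by norm_num)
  have hdual5 : HF J 5 = HF I 5 + HF (J.colon I) 3 := hJdual I hI hJI 5 (by norm_num)
  by_contra! hI5
  have hK4 := HF_four_le_of_HF_three_le hEGH hp (K := J.colon I)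
    (fun i => Ideal.le_colon (Ideal.subset_span ⟨i, rfl⟩)) (by omega)
  omega
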